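/- For every α ∈ [0,1], the maximum of the three real numbers 1/2 + (1−α)/(2√2), 1/2 + (1/8)√(4+(1−α)²), and 1/2 + (1/4)√(1+α²) is equal to: 1/2 + (1−α)/(2√2) if 0 ≤ α ≤ 1 − 2/√7; 1/2 + (1/8)√(4+(1−α)²) if 1 − 2/√7 < α ≤ 1/3; and 1/2 + (1/4)√(1+α²) if 1/3 < α ≤ 1. (These three expressions are the optimal average success probabilities of the unitary, mixed, and measure-and-prepare projective strategies, respectively, so their pointwise maximum is the projective bound P̄_succ^PVM(α) of Proposition 1.) -/
import Mathlib

private lemma aux_le_of_sq (x y : ℝ) (hx : 0 ≤ x) (hy : 0 ≤ y) (h : x ^ 2 ≤ y ^ 2) :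
    x ≤ y := by nlinarith [sq_nonneg (x - y), sq_nonneg (x + y)]

set_option maxHeartbeats 800000 in
/-- The projective bound `P̄_succ^PVM(α)` of Proposition 1: the maximum of the optimal
average success probabilities of the unitary, mixed, and measure-and-prepare projective
strategies is the stated piecewise function of `α`, with breakpoints at
`α = 1 - 2/√7` and `α = 1/3`. -/
theorem pvm_bound_piecewise (α : ℝ) (hα : α ∈ Set.Icc (0 : ℝ) 1) :
    (α ≤ 1 - 2 / Real.sqrt 7 →
      max (max (1 / 2 + (1 - α) / (2 * Real.sqrt 2))
            (1 / 2 + Real.sqrt (4 + (1 - α) ^ 2) / 8))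
          (1 / 2 + Real.sqrt (1 + α ^ 2) / 4)
        = 1 / 2 + (1 - α) / (2 * Real.sqrt 2)) ∧
    (1 - 2 / Real.sqrt 7 < α → α ≤ 1 / 3 →
      max (max (1 / 2 + (1 - α) / (2 * Real.sqrt 2))
            (1 / 2 + Real.sqrt (4 + (1 - α) ^ 2) / 8))
          (1 / 2 + Real.sqrt (1 + α ^ 2) / 4)
        = 1 / 2 + Real.sqrt (4 + (1 - α) ^ 2) / 8) ∧
    (1 / 3 < α →
      max (max (1 / 2 + (1 - α) / (2 * Real.sqrt 2))
            (1 / 2 + Real.sqrt (4 + (1 - α) ^ 2) / 8))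
          (1 / 2 + Real.sqrt (1 + α ^ 2) / 4)
        = 1 / 2 + Real.sqrt (1 + α ^ 2) / 4) := by
  obtain ⟨h0, h1⟩ := hα
  set s2 := Real.sqrt 2 with hs2def
  have hs2 : s2 ^ 2 = 2 := Real.sq_sqrt (by norm_num)
  have hs2p : 0 < s2 := Real.sqrt_pos.mpr (by norm_num)
  set s7 := Real.sqrt 7 with hs7def
  have hs7 : s7 ^ 2 = 7 := Real.sq_sqrt (by norm_num)
  have hs7p : 0 < s7 := Real.sqrt_pos.mpr (by norm_num)
  set u := Real.sqrt (4 + (1 - α) ^ 2) with hudef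
  have hu : u ^ 2 = 4 + (1 - α) ^ 2 := Real.sq_sqrt (by positivity)
  have hup : 0 ≤ u := Real.sqrt_nonneg _
  set v := Real.sqrt (1 + α ^ 2) with hvdef
  have hv : v ^ 2 = 1 + α ^ 2 := Real.sq_sqrt (by positivity)
  have hvp : 0 ≤ v := Real.sqrt_nonneg _
  have hf1p : 0 ≤ (1 - α) / (2 * s2) := div_nonneg (by linarith) (by positivity)
  refine ⟨?_, ?_, ?_⟩
  · intro h
    have ht : 2 ≤ s7 * (1 - α) := by
      have h' : 2 / s7 ≤ 1 - α := by linarith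
      rw [div_le_iff₀ hs7p] at h'
      linarith [h']
    have h7 : 4 ≤ 7 * (1 - α) ^ 2 := by nlinarith [ht, hs7, hs7p.le]
    have h7t : 5 ≤ 7 * (1 - α) := by
      have key : 0 ≤ s7 * (s7 * (1 - α) - 2) := mul_nonneg hs7p.le (by linarith)
      nlinarith [key, hs7, sq_nonneg (2 * s7 - 5), hs7p.le]
    have hf2 : u / 8 ≤ (1 - α) / (2 * s2) := by
      apply aux_le_of_sq _ _ (by positivity) hf1p
      rw [div_pow, div_pow, mul_pow, hs2]
      rw [div_le_div_iff₀ (by norm_num) (by norm_num)]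
      nlinarith [hu, h7]
    have hf3 : v / 4 ≤ (1 - α) / (2 * s2) := by
      apply aux_le_of_sq _ _ (by positivity) hf1p
      rw [div_pow, div_pow, mul_pow, hs2]
      rw [div_le_div_iff₀ (by norm_num) (by norm_num)]
      nlinarith [hv, h7t, h7]
    rw [max_eq_left (by linarith : 1 / 2 + u / 8 ≤ 1 / 2 + (1 - α) / (2 * s2)),
        max_eq_left (by linarith : 1 / 2 + v / 4 ≤ 1 / 2 + (1 - α) / (2 * s2))]
  · intro h h3
    have ht : s7 * (1 - α) ≤ 2 := by
      have h' : 1 - α < 2 / s7 := by linarith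
      rw [lt_div_iff₀ hs7p] at h'
      linarith [h']
    have h7 : 7 * (1 - α) ^ 2 ≤ 4 := by
      nlinarith [ht, hs7, mul_nonneg hs7p.le (by linarith : (0:ℝ) ≤ 1 - α)]
    have hf1 : (1 - α) / (2 * s2) ≤ u / 8 := by
      apply aux_le_of_sq _ _ hf1p (by positivity)
      rw [div_pow, div_pow, mul_pow, hs2]
      rw [div_le_div_iff₀ (by norm_num) (by norm_num)]
      nlinarith [hu, h7]
    have hf3 : v / 4 ≤ u / 8 := by
      apply aux_le_of_sq _ _ (by positivity) (by positivity)
      rw [div_pow, div_pow]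
      rw [div_le_div_iff₀ (by norm_num) (by norm_num)]
      nlinarith [hu, hv, h3]
    rw [max_eq_right (by linarith : 1 / 2 + (1 - α) / (2 * s2) ≤ 1 / 2 + u / 8),
        max_eq_left (by linarith : 1 / 2 + v / 4 ≤ 1 / 2 + u / 8)]
  · intro h
    have hf1 : (1 - α) / (2 * s2) ≤ v / 4 := by
      apply aux_le_of_sq _ _ hf1p (by positivity)
      rw [div_pow, div_pow, mul_pow, hs2]
      rw [div_le_div_iff₀ (by norm_num) (by norm_num)]
      nlinarith [hv, h, h1]
    have hf2 : u / 8 ≤ v / 4 := by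
      apply aux_le_of_sq _ _ (by positivity) (by positivity)
      rw [div_pow, div_pow]
      rw [div_le_div_iff₀ (by norm_num) (by norm_num)]
      nlinarith [hu, hv, h]
    rw [max_eq_right (max_le (by linarith) (by linarith))]
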